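/- Let R be a finite set of continuous strictly decreasing functions on [α,β] and B a finite set of continuous strictly increasing functions on [α,β], and assume no red curve equals any blue curve at α or at β. Then the total number of red-blue intersection pairs (r,b) with r(x) = b(x) for some x ∈ [α,β] equals Σ_{r ∈ R} ( |{b ∈ B : b(α) < r(α)}| − |{b ∈ B : b(β) < r(β)}| ). -/
import Mathlib


open scoped Classical

/-- Red-blue intersection counting: the number of red-blue pairs intersecting
in the slab `[α,β]` equals, summed over red curves, the number of blue curves
below the red curve at `α` minus the number below it at `β`. -/
theorem red_blue_intersection_count
    {ι κ : Type*} (α β : ℝ) (hαβ : α ≤ β)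
    (R : Finset ι) (B : Finset κ) (r : ι → ℝ → ℝ) (b : κ → ℝ → ℝ)
    (hr_cont : ∀ i ∈ R, ContinuousOn (r i) (Set.Icc α β))
    (hr : ∀ i ∈ R, StrictAntiOn (r i) (Set.Icc α β))
    (hb_cont : ∀ j ∈ B, ContinuousOn (b j) (Set.Icc α β))
    (hb : ∀ j ∈ B, StrictMonoOn (b j) (Set.Icc α β))
    (hne : ∀ i ∈ R, ∀ j ∈ B, r i α ≠ b j α ∧ r i β ≠ b j β) :
    (((R ×ˢ B).filter
        (fun p => ∃ x ∈ Set.Icc α β, r p.1 x = b p.2 x)).card : ℤ) =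
      ∑ i ∈ R,
        (((B.filter (fun j => b j α < r i α)).card : ℤ) -
          ((B.filter (fun j => b j β < r i β)).card : ℤ)) := by
  classical
  have hαm : (α : ℝ) ∈ Set.Icc α β := ⟨le_rfl, hαβ⟩
  have hβm : (β : ℝ) ∈ Set.Icc α β := ⟨hαβ, le_rfl⟩
  have key : ∀ i ∈ R, ∀ j ∈ B,
      (∃ x ∈ Set.Icc α β, r i x = b j x) ↔ (b j α < r i α ∧ r i β < b j β) := by
    intro i hi j hj
    constructor
    · rintro ⟨x, hx, hrb⟩
      have h1 : b j α ≤ b j x := (hb j hj).monotoneOn hαm hx hx.1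
      have h2 : r i x ≤ r i α := (hr i hi).antitoneOn hαm hx hx.1
      have h3 : b j x ≤ b j β := (hb j hj).monotoneOn hx hβm hx.2
      have h4 : r i β ≤ r i x := (hr i hi).antitoneOn hx hβm hx.2
      refine ⟨lt_of_le_of_ne (by linarith) (Ne.symm (hne i hi j hj).1), ?_⟩
      exact lt_of_le_of_ne (by linarith) (hne i hi j hj).2
    · rintro ⟨h1, h2⟩
      have hc : ContinuousOn (fun x => r i x - b j x) (Set.Icc α β) :=
        (hr_cont i hi).sub (hb_cont j hj)
      have h0 : (0 : ℝ) ∈ Set.Icc (r i β - b j β) (r i α - b j α) :=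
        ⟨by linarith, by linarith⟩
      obtain ⟨x, hx, hfx⟩ := intermediate_value_Icc' hαβ hc h0
      refine ⟨x, hx, ?_⟩
      have : r i x - b j x = 0 := hfx
      linarith
  have hsplit : ((R ×ˢ B).filter
      (fun p => ∃ x ∈ Set.Icc α β, r p.1 x = b p.2 x)).card
      = ∑ i ∈ R, (B.filter (fun j => ∃ x ∈ Set.Icc α β, r i x = b j x)).card := by
    rw [Finset.card_filter, Finset.sum_product]
    exact Finset.sum_congr rfl fun i _ => (Finset.card_filter _ _).symm
  rw [hsplit]
  push_cast
  refine Finset.sum_congr rfl ?_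
  intro i hi
  have hfe : B.filter (fun j => ∃ x ∈ Set.Icc α β, r i x = b j x)
      = B.filter (fun j => b j α < r i α) \ B.filter (fun j => b j β < r i β) := by
    ext j
    simp only [Finset.mem_filter, Finset.mem_sdiff, not_and]
    constructor
    · rintro ⟨hjB, hex⟩
      obtain ⟨h1, h2⟩ := (key i hi j hjB).1 hex
      exact ⟨⟨hjB, h1⟩, fun _ h => absurd h (not_lt.mpr h2.le)⟩
    · rintro ⟨⟨hjB, h1⟩, h2⟩
      have hne2 := (hne i hi j hjB).2
      have : r i β < b j β := lt_of_le_of_ne (not_lt.mp (h2 hjB)) hne2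
      exact ⟨hjB, (key i hi j hjB).2 ⟨h1, this⟩⟩
  rw [hfe]
  have hsub : B.filter (fun j => b j β < r i β) ⊆ B.filter (fun j => b j α < r i α) := by
    intro j hj
    simp only [Finset.mem_filter] at hj ⊢
    have h1 : b j α ≤ b j β := (hb j hj.1).monotoneOn hαm hβm hαβ
    have h2 : r i β ≤ r i α := (hr i hi).antitoneOn hαm hβm hαβ
    exact ⟨hj.1, by linarith [hj.2]⟩
  rw [Finset.card_sdiff_of_subset hsub]
  exact_mod_cast Nat.cast_sub (Finset.card_le_card hsub)
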